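/- For proper numerical sets R and S, the dual of the conjoint sum satisfies (R ⊞_C S)* = S* ⊞_B R*. -/
import Mathlib


open Set

/-- A numerical set: contains 0 and has finite complement in ℕ. -/
def IsNumericalSet (R : Set ℕ) : Prop := 0 ∈ R ∧ Rᶜ.Finite

/-- A proper numerical set: a numerical set different from ℕ₀. -/
def ProperNumericalSet (R : Set ℕ) : Prop := 0 ∈ R ∧ Rᶜ.Finite ∧ Rᶜ.Nonempty

/-- The set of gaps of a numerical set. -/
def gaps (R : Set ℕ) : Set ℕ := Rᶜ

/-- The genus: the number of gaps. -/
noncomputable def genus (R : Set ℕ) : ℕ := Rᶜ.ncard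

/-- The Frobenius number: the largest gap (for a proper numerical set). -/
noncomputable def frob (R : Set ℕ) : ℕ := sSup Rᶜ

/-- The nsCond: F(R)+1 for a proper numerical set, and 0 for ℕ₀. -/
noncomputable def nsCond (R : Set ℕ) : ℕ := by
  classical exact if Rᶜ = ∅ then 0 else frob R + 1

/-- The dual numerical set: for 0 ≤ x ≤ F(R), x ∈ R* iff F(R)-x ∉ R,
together with all integers > F(R). -/
def dual (R : Set ℕ) : Set ℕ := {x | frob R < x ∨ frob R - x ∉ R}

/-- Symmetry: for every 0 ≤ a ≤ F(R), exactly one of a, F(R)-a belongs to R. -/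
def IsSymmetric (R : Set ℕ) : Prop := ∀ a ≤ frob R, (a ∈ R ↔ frob R - a ∉ R)

/-- Bonded sum: left elements of R, then F(R) = c(R)-1, then S shifted up by c(R)-1. -/
def bsum (R S : Set ℕ) : Set ℕ := (R ∩ Iio (nsCond R)) ∪ ((· + (nsCond R - 1)) '' S)

/-- End-to-end sum: small elements of R, then S shifted up by c(R). -/
def esum (R S : Set ℕ) : Set ℕ := (R ∩ Iio (nsCond R)) ∪ ((· + nsCond R) '' S)

/-- Conjoint sum: left elements of R, then the nonzero part of S shifted up by c(R)-1. -/
def csum (R S : Set ℕ) : Set ℕ := (R ∩ Iio (nsCond R)) ∪ ((· + (nsCond R - 1)) '' (S \ {0}))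

/-- The numerical set R - r obtained by subtracting r from all elements of R that are ≥ r. -/
def shiftDown (R : Set ℕ) (r : ℕ) : Set ℕ := {x | x + r ∈ R}

/-- Hook set of the column corresponding to a left element r of R. -/
def hookSet (R : Set ℕ) (r : ℕ) : Set ℕ := gaps (shiftDown R r)

/-- Pseudo-Frobenius numbers. -/
def PF (R : Set ℕ) : Set ℕ := {z | z ∉ R ∧ ∀ r ∈ R, r ≠ 0 → z + r ∈ R}

/-- The type of a numerical semigroup. -/
noncomputable def typ (R : Set ℕ) : ℕ := (PF R).ncard

/-- A numerical semigroup: a numerical set closed under addition. -/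
def IsNumericalSemigroup (R : Set ℕ) : Prop :=
  IsNumericalSet R ∧ ∀ x ∈ R, ∀ y ∈ R, x + y ∈ R

/-- Almost symmetric numerical semigroup: 2g(R) = F(R) + t(R). -/
def AlmostSymmetric (R : Set ℕ) : Prop := 2 * genus R = frob R + typ R


section Aux

variable {R S : Set ℕ}

lemma frob_not_mem (hR : ProperNumericalSet R) : frob R ∉ R := by
  have h : frob R ∈ Rᶜ := Set.Nonempty.csSup_mem hR.2.2 hR.2.1
  exact h

lemma mem_of_frob_lt (hR : ProperNumericalSet R) {x : ℕ} (hx : frob R < x) : x ∈ R := by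
  by_contra h
  exact absurd (le_csSup hR.2.1.bddAbove (by exact h)) (not_le.mpr hx)

lemma frob_pos (hR : ProperNumericalSet R) : 1 ≤ frob R := by
  rcases Nat.eq_zero_or_pos (frob R) with h | h
  · exact absurd (h ▸ hR.1) (frob_not_mem hR)
  · exact h

lemma nsCond_eq (hR : ProperNumericalSet R) : nsCond R = frob R + 1 := by
  unfold nsCond
  rw [if_neg (Set.nonempty_iff_ne_empty.mp hR.2.2)]

lemma frob_dual (hS : ProperNumericalSet S) : frob (dual S) = frob S := by
  have hg : IsGreatest (dual S)ᶜ (frob S) := by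
    constructor
    · intro h
      rcases h with h | h
      · exact lt_irrefl _ h
      · exact h (by simpa using hS.1)
    · intro x hx
      simp only [dual, Set.mem_compl_iff, Set.mem_setOf_eq, not_or, not_not] at hx
      exact le_of_not_gt hx.1
  exact hg.csSup_eq

lemma mem_csum (hR : ProperNumericalSet R) {t : ℕ} :
    t ∈ csum R S ↔ (t ∈ R ∧ t < frob R + 1) ∨ ∃ s ∈ S, s ≠ 0 ∧ s + frob R = t := by
  simp only [csum, nsCond_eq hR, Nat.add_sub_cancel, Set.mem_union, Set.mem_inter_iff,
    Set.mem_Iio, Set.mem_image, Set.mem_diff, Set.mem_singleton_iff]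
  constructor
  · rintro (h | ⟨s, ⟨hs1, hs2⟩, hs3⟩)
    · exact Or.inl h
    · exact Or.inr ⟨s, hs1, hs2, hs3⟩
  · rintro (h | ⟨s, hs1, hs2, hs3⟩)
    · exact Or.inl h
    · exact Or.inr ⟨s, ⟨hs1, hs2⟩, hs3⟩

lemma frob_csum (hR : ProperNumericalSet R) (hS : ProperNumericalSet S) :
    frob (csum R S) = frob S + frob R := by
  have hFR := frob_pos hR
  have hFS := frob_pos hS
  have hg : IsGreatest (csum R S)ᶜ (frob S + frob R) := by
    constructor
    · intro h
      rw [mem_csum hR] at h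
      rcases h with ⟨_, h2⟩ | ⟨s, hs1, hs2, hs3⟩
      · omega
      · have : s = frob S := by omega
        exact frob_not_mem hS (this ▸ hs1)
    · intro x hx
      by_contra hlt
      push_neg at hlt
      apply hx
      rw [mem_csum hR]
      exact Or.inr ⟨x - frob R, mem_of_frob_lt hS (by omega), by omega, by omega⟩
  exact hg.csSup_eq

lemma dual_proper (hS : ProperNumericalSet S) : ProperNumericalSet (dual S) := by
  refine ⟨?_, ?_, ?_⟩
  · right
    simpa using frob_not_mem hS
  · apply Set.Finite.subset (Set.finite_Iic (frob S))
    intro x hx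
    simp only [dual, Set.mem_compl_iff, Set.mem_setOf_eq, not_or, not_not] at hx
    simp only [Set.mem_Iic]
    exact le_of_not_gt hx.1
  · refine ⟨frob S, ?_⟩
    intro h
    rcases h with h | h
    · exact lt_irrefl _ h
    · exact h (by simpa using hS.1)

end Aux

theorem stmt_14 (R S : Set ℕ) (hR : ProperNumericalSet R) (hS : ProperNumericalSet S) :
    dual (csum R S) = bsum (dual S) (dual R) := by
  have hFR := frob_pos hR
  have hFS := frob_pos hS
  have hRnot := frob_not_mem hR
  have hSnot := frob_not_mem hS
  have hR0 := hR.1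
  have hS0 := hS.1
  have hL : ∀ x : ℕ, x ∈ dual (csum R S) ↔
      (frob S + frob R < x ∨ frob S + frob R - x ∉ csum R S) := by
    intro x
    simp only [dual, Set.mem_setOf_eq, frob_csum hR hS]
  have hRt : ∀ x : ℕ, x ∈ bsum (dual S) (dual R) ↔
      ((x ∈ dual S ∧ x < frob S + 1) ∨ ∃ y ∈ dual R, y + frob S = x) := by
    intro x
    simp only [bsum, nsCond_eq (dual_proper hS), frob_dual hS, Nat.add_sub_cancel,
      Set.mem_union, Set.mem_inter_iff, Set.mem_Iio, Set.mem_image]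
  have hmemD : ∀ (T : Set ℕ) (y : ℕ), y ∈ dual T ↔ (frob T < y ∨ frob T - y ∉ T) := by
    intro T y; rfl
  ext x
  rw [hL, hRt]
  constructor
  · rintro (hlt | hnot)
    · right
      refine ⟨x - frob S, ?_, by omega⟩
      rw [hmemD]
      left; omega
    · rw [mem_csum hR] at hnot
      push_neg at hnot
      by_cases hx : frob S + frob R < x
      · right
        refine ⟨x - frob S, ?_, by omega⟩
        rw [hmemD]; left; omega
      push_neg at hx
      rcases lt_trichotomy x (frob S) with h1 | h1 | h1
      · left
        refine ⟨?_, by omega⟩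
        rw [hmemD]
        right
        intro hmem
        exact hnot.2 (frob S - x) hmem (by omega) (by omega)
      · right
        refine ⟨0, ?_, by omega⟩
        rw [hmemD]
        right
        simpa using hRnot
      · right
        refine ⟨x - frob S, ?_, by omega⟩
        rw [hmemD]
        right
        intro hmem
        have h2 : frob R - (x - frob S) ∈ R := hmem
        have h3 : frob S + frob R - x = frob R - (x - frob S) := by omega
        have := hnot.1 (h3 ▸ h2)
        omega
  · rintro (⟨hd, hxlt⟩ | ⟨y, hy, hyx⟩)
    · rw [hmemD] at hd
      rcases hd with h | h
      · omega
      · have hxne : x ≠ frob S := by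
          intro he
          apply h
          simp only [he, Nat.sub_self]
          exact hS0
        right
        rw [mem_csum hR]
        rintro (⟨hmem, hlt⟩ | ⟨s, hs1, hs2, hs3⟩)
        · omega
        · apply h
          have : s = frob S - x := by omega
          exact this ▸ hs1
    · rw [hmemD] at hy
      rcases hy with h | h
      · left; omega
      · by_cases hyF : frob R < y
        · left; omega
        push_neg at hyF
        right
        rw [mem_csum hR]
        rintro (⟨hmem, hlt⟩ | ⟨s, hs1, hs2, hs3⟩)
        · apply h
          have h3 : frob R - y = frob S + frob R - x := by omega
          exact h3 ▸ hmem
        · omega
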